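/- Let P and E be real Hilbert spaces, let J : P → E be a continuous linear map with adjoint J† : E → P, let Δ ∈ E, and fix reals t ∈ [0,1) and t' ∈ (0,1). Define gradL := 2·J†(Δ), g_CA := (t'/(1−t'))·Δ, and gradJ := t'·(1−t)·J†(g_CA). Then gradJ = (t'²·(1−t)/(2·(1−t'))) · gradL, and the scalar t'²·(1−t)/(2·(1−t')) is strictly positive; in particular the descent directions −gradJ and −gradL are positive scalar multiples of each other. -/

import Mathlib

theorem ofp_gradient_proportionality_general
    {P : Type*} [NormedAddCommGroup P] [InnerProductSpace ℝ P] [CompleteSpace P]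
    {E : Type*} [NormedAddCommGroup E] [InnerProductSpace ℝ E] [CompleteSpace E]
    (J : P →L[ℝ] E) (Δ : E)
    (t t' : ℝ) (ht1 : t < 1) (ht'0 : 0 < t') (ht'1 : t' < 1)
    (gradL : P) (hgradL : gradL = (2 : ℝ) • (ContinuousLinearMap.adjoint J Δ))
    (g_CA : E) (hg_CA : g_CA = (t' / (1 - t')) • Δ)
    (gradJ : P)
    (hgradJ : gradJ = (t' * (1 - t)) • (ContinuousLinearMap.adjoint J g_CA)) :
    gradJ = (t' ^ 2 * (1 - t) / (2 * (1 - t'))) • gradL ∧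
      0 < t' ^ 2 * (1 - t) / (2 * (1 - t')) := by
  have h1t : 0 < 1 - t := sub_pos.mpr ht1
  have h1t' : 0 < 1 - t' := sub_pos.mpr ht'1
  refine ⟨?_, by positivity⟩
  subst hgradL hg_CA hgradJ
  rw [map_smul, smul_smul, smul_smul]
  congr 1
  field_simp

/-- Gradient proportionality of self-guidance with the CFG-Augmentation term:
with `gradL = 2•J†Δ`, `g_CA = (t'/(1−t'))•Δ` and
`gradJ = t'·(1−t)•J†(g_CA)`, one has
`gradJ = (t'²(1−t)/(2(1−t'))) • gradL` with a strictly positive scalar, so the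
descent directions `−gradJ` and `−gradL` are positive multiples of each other. -/
theorem ofp_gradient_proportionality
    {P : Type*} [NormedAddCommGroup P] [InnerProductSpace ℝ P] [CompleteSpace P]
    {E : Type*} [NormedAddCommGroup E] [InnerProductSpace ℝ E] [CompleteSpace E]
    (J : P →L[ℝ] E) (Δ : E)
    (t t' : ℝ) (ht0 : 0 ≤ t) (ht1 : t < 1) (ht'0 : 0 < t') (ht'1 : t' < 1)
    (gradL : P) (hgradL : gradL = (2 : ℝ) • (ContinuousLinearMap.adjoint J Δ))
    (g_CA : E) (hg_CA : g_CA = (t' / (1 - t')) • Δ)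
    (gradJ : P)
    (hgradJ : gradJ = (t' * (1 - t)) • (ContinuousLinearMap.adjoint J g_CA)) :
    gradJ = (t' ^ 2 * (1 - t) / (2 * (1 - t'))) • gradL ∧
      0 < t' ^ 2 * (1 - t) / (2 * (1 - t')) :=
  ofp_gradient_proportionality_general J Δ t t' ht1 ht'0 ht'1 gradL hgradL g_CA hg_CA gradJ hgradJ
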